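/- For the single grain-error channel, the weight assignment on {0,1}^n given by w_x = 1/ρ(x) if μ(x) ≤ 1 and w_x = (1/ρ(x))·(1 - μ(x)/ρ(x)²) otherwise, is a fractional transversal: for every x ∈ {0,1}^n, Σ_{y ∈ B_{G,1}(x)} w_y ≥ 1. -/

import Mathlib

/-- Extend a length-`n` binary word to `ℕ → Bool` (by `false` beyond `n`). -/
def ext (n : ℕ) (y : Fin n → Bool) : ℕ → Bool :=
  fun i => if h : i < n then y ⟨i, h⟩ else false

/-- `rho n x`: the number of runs of the length-`n` word `x`. -/
def rho (n : ℕ) (x : ℕ → Bool) : ℕ :=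
  1 + ((Finset.range (n - 1)).filter (fun i => x i ≠ x (i + 1))).card

/-- `mu n x`: the number of middle runs of length 1 of the length-`n` word `x`. -/
def mu (n : ℕ) (x : ℕ → Bool) : ℕ :=
  ((Finset.Icc 1 (n - 2)).filter
    (fun i => x (i - 1) ≠ x i ∧ x i ≠ x (i + 1))).card

/-- The weight assigned to a length-`m` word `y`: `1/ρ(y)` if `μ(y) ≤ 1`, and
`(1/ρ(y))(1 - μ(y)/ρ(y)²)` otherwise. -/
noncomputable def wt (m : ℕ) (y : Fin m → Bool) : ℝ :=
  if mu m (ext m y) ≤ 1 then 1 / (rho m (ext m y) : ℝ)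
  else (1 / (rho m (ext m y) : ℝ)) * (1 - (mu m (ext m y) : ℝ) / (rho m (ext m y) : ℝ) ^ 2)

/-- The single grain-error ball `B_{G,1}(x) ⊆ {0,1}^n`: `x` together with all
flips of a position `i ≥ 1` (0-indexed) whose symbol differs from the previous
one. -/
def ballG (n : ℕ) (x : Fin n → Bool) : Finset (Fin n → Bool) :=
  insert x
    (((Finset.Ico 1 n).filter (fun i => ext n x i ≠ ext n x (i - 1))).image
      (fun i => fun j : Fin n => if (j : ℕ) = i then !(x j) else x j))

/-!
Let `G` be the set of positions `i ≥ 1` at which a run starts, so that `ρ(x) = |G| + 1`, the ball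
consists of `x` and its flips at the positions of `G`, and `μ(x)` counts the `i ∈ G` with
`i + 1 ∈ G`. Flipping such an `i` merges three runs into one (`ρ` drops by 2, `μ` by at least 1);
flipping any other `i ∈ G` lowers `ρ` by at most 1 and raises `μ` by at most 1. As
`w_y ≥ 1/ρ(y) - M/ρ(y)³` whenever `μ(y) ≤ M`, the sum over the ball is at least
`μ (1/(ρ-2) - (μ-1)/(ρ-2)³) + (ρ-μ) (1/ρ - (μ+1)/(ρ-1)³)`, which is `≥ 1` once `μ ≥ 1`.
If `μ = 0`, every point of the ball has `μ ≤ 1`, so its weight is exactly `1/ρ(y) ≥ 1/ρ`.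
-/

namespace Finset

def withSucc (G : Finset ℕ) : Finset ℕ := G.filter (· + 1 ∈ G)

variable {G G' : Finset ℕ} {i : ℕ}

theorem mem_withSucc {j : ℕ} : j ∈ withSucc G ↔ j ∈ G ∧ j + 1 ∈ G := mem_filter

theorem withSucc_mono (h : G' ⊆ G) : withSucc G' ⊆ withSucc G := fun _ hj =>
  mem_withSucc.2 ⟨h (mem_withSucc.1 hj).1, h (mem_withSucc.1 hj).2⟩

theorem withSucc_subset_of_subset_insert_erase (h : G' ⊆ insert (i + 1) (G.erase i)) :
    withSucc G' ⊆ insert (i + 1) (withSucc G) := fun j hj => by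
  rw [mem_withSucc] at hj
  have h1 := h hj.1
  have h2 := h hj.2
  simp only [mem_insert, mem_erase, mem_withSucc] at h1 h2 ⊢
  rcases h1 with rfl | ⟨hji, hjG⟩
  · exact Or.inl rfl
  · exact Or.inr ⟨hjG, h2.resolve_left (by omega) |>.2⟩

theorem card_withSucc_lt (hG : G.Nonempty) : (withSucc G).card < G.card := by
  refine card_lt_card ⟨filter_subset _ _, fun h => ?_⟩
  have := (mem_withSucc.1 (h (G.max'_mem hG))).2
  exact absurd (G.le_max' _ this) (by omega)

end Finset

open Finset hiding ext

def grainPositions (n : ℕ) (X : ℕ → Bool) : Finset ℕ :=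
  (Ico 1 n).filter (fun i => X i ≠ X (i - 1))

def flipAt {n : ℕ} (x : Fin n → Bool) (i : ℕ) : Fin n → Bool :=
  fun j => if (j : ℕ) = i then !(x j) else x j

theorem ballG_eq (n : ℕ) (x : Fin n → Bool) :
    ballG n x = insert x ((grainPositions n (ext n x)).image (flipAt x)) := rfl

section Word

variable {n i j : ℕ} {X : ℕ → Bool}

theorem mem_grainPositions : i ∈ grainPositions n X ↔ 1 ≤ i ∧ i < n ∧ X i ≠ X (i - 1) := by
  simp [grainPositions, and_assoc]

theorem rho_eq_card_grainPositions_add_one : rho n X = (grainPositions n X).card + 1 := by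
  have : grainPositions n X =
      ((range (n - 1)).filter (fun i => X i ≠ X (i + 1))).image (· + 1) := by
    ext j
    simp only [mem_grainPositions, mem_image, mem_filter, mem_range]
    constructor
    · rintro ⟨h1, h2, h3⟩
      refine ⟨j - 1, ⟨by omega, ?_⟩, by omega⟩
      rw [Nat.sub_add_cancel h1]
      exact Ne.symm h3
    · rintro ⟨k, ⟨hk, hne⟩, rfl⟩
      exact ⟨by omega, by omega, by simpa using Ne.symm hne⟩
  rw [rho, this, card_image_of_injective _ (add_left_injective 1), add_comm]

theorem mu_eq_card_withSucc : mu n X = (withSucc (grainPositions n X)).card := by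
  unfold mu
  congr 1
  ext j
  simp only [mem_filter, mem_Icc, withSucc, mem_grainPositions]
  constructor
  · rintro ⟨⟨h1, h2⟩, h3, h4⟩
    exact ⟨⟨h1, by omega, Ne.symm h3⟩, by omega, by omega, by simpa using Ne.symm h4⟩
  · rintro ⟨⟨h1, -, h3⟩, -, h5, h6⟩
    exact ⟨⟨h1, by omega⟩, Ne.symm h3, by simpa using Ne.symm h6⟩

theorem mu_add_two_le_rho (h : 0 < mu n X) : mu n X + 2 ≤ rho n X := by
  rw [mu_eq_card_withSucc] at h ⊢
  have hG : (grainPositions n X).Nonempty :=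
    (card_pos.1 h).mono (filter_subset _ _)
  have := card_withSucc_lt hG
  rw [rho_eq_card_grainPositions_add_one]
  omega

theorem two_le_rho_of_mem (hi : i ∈ grainPositions n X) : 2 ≤ rho n X := by
  rw [rho_eq_card_grainPositions_add_one]
  exact Nat.succ_le_succ (card_pos.2 ⟨i, hi⟩)

theorem mem_grainPositions_update_of_ne_succ (hi : i ∈ grainPositions n X)
    (hj : j ≠ i + 1) :
    j ∈ grainPositions n (Function.update X i (!X i)) ↔ j ≠ i ∧ j ∈ grainPositions n X := by
  rw [mem_grainPositions] at hi
  simp only [mem_grainPositions, Function.update_apply]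
  by_cases hji : j = i
  · subst hji
    simp only [if_true, if_neg (by omega : j - 1 ≠ j)]
    cases h : X j <;> cases h' : X (j - 1) <;> simp_all
  · simp only [hji, if_false, if_neg (by omega : j - 1 ≠ i)]
    tauto

theorem succ_mem_grainPositions_update :
    i + 1 ∈ grainPositions n (Function.update X i (!X i)) ↔
      i + 1 < n ∧ i + 1 ∉ grainPositions n X := by
  simp only [mem_grainPositions, Function.update_apply, Nat.add_sub_cancel, if_true,
    if_neg (by omega : i + 1 ≠ i)]
  cases X (i + 1) <;> cases X i <;> simp

theorem grainPositions_update_of_succ_mem (hi : i ∈ grainPositions n X)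
    (hs : i + 1 ∈ grainPositions n X) :
    grainPositions n (Function.update X i (!X i)) =
      ((grainPositions n X).erase i).erase (i + 1) := by
  ext j
  by_cases hj : j = i + 1
  · subst hj
    simp [succ_mem_grainPositions_update, hs]
  · simp [mem_grainPositions_update_of_ne_succ hi hj, hj]

theorem grainPositions_update_subset (hi : i ∈ grainPositions n X) :
    grainPositions n (Function.update X i (!X i)) ⊆
      insert (i + 1) ((grainPositions n X).erase i) := by
  intro j hj
  by_cases hji : j = i + 1
  · exact mem_insert.2 (Or.inl hji)
  · exact mem_insert_of_mem (mem_erase.2 ((mem_grainPositions_update_of_ne_succ hi hji).1 hj))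

theorem erase_subset_grainPositions_update (hi : i ∈ grainPositions n X)
    (hs : i + 1 ∉ grainPositions n X) :
    (grainPositions n X).erase i ⊆ grainPositions n (Function.update X i (!X i)) := by
  intro j hj
  have hji : j ≠ i + 1 := by rintro rfl; exact hs (mem_erase.1 hj).2
  exact (mem_grainPositions_update_of_ne_succ hi hji).2 (mem_erase.1 hj)

theorem rho_update_of_succ_mem (hi : i ∈ grainPositions n X)
    (hs : i + 1 ∈ grainPositions n X) :
    rho n (Function.update X i (!X i)) + 2 = rho n X := by
  have hs' : i + 1 ∈ (grainPositions n X).erase i := mem_erase.2 ⟨by omega, hs⟩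
  have := card_pos.2 ⟨_, hs'⟩
  have := card_erase_of_mem hi
  rw [rho_eq_card_grainPositions_add_one, rho_eq_card_grainPositions_add_one,
    grainPositions_update_of_succ_mem hi hs, card_erase_of_mem hs']
  omega

theorem rho_update_le (hi : i ∈ grainPositions n X) :
    rho n (Function.update X i (!X i)) ≤ rho n X := by
  have h := (card_le_card (grainPositions_update_subset hi)).trans (card_insert_le _ _)
  rw [card_erase_of_mem hi] at h
  have := card_pos.2 ⟨_, hi⟩
  rw [rho_eq_card_grainPositions_add_one, rho_eq_card_grainPositions_add_one]
  omega

theorem rho_le_rho_update_add_one (hi : i ∈ grainPositions n X)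
    (hs : i + 1 ∉ grainPositions n X) :
    rho n X ≤ rho n (Function.update X i (!X i)) + 1 := by
  have h := card_le_card (erase_subset_grainPositions_update hi hs)
  rw [card_erase_of_mem hi] at h
  rw [rho_eq_card_grainPositions_add_one, rho_eq_card_grainPositions_add_one]
  omega

theorem mu_update_le (hi : i ∈ grainPositions n X) :
    mu n (Function.update X i (!X i)) ≤ mu n X + 1 := by
  rw [mu_eq_card_withSucc, mu_eq_card_withSucc]
  exact (card_le_card (withSucc_subset_of_subset_insert_erase
    (grainPositions_update_subset hi))).trans (card_insert_le _ _)

theorem mu_update_lt_of_succ_mem (hi : i ∈ grainPositions n X)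
    (hs : i + 1 ∈ grainPositions n X) :
    mu n (Function.update X i (!X i)) < mu n X := by
  rw [mu_eq_card_withSucc, mu_eq_card_withSucc, grainPositions_update_of_succ_mem hi hs]
  refine card_lt_card ⟨withSucc_mono ((erase_subset _ _).trans (erase_subset _ _)), fun h => ?_⟩
  have := (mem_withSucc.1 (h (mem_withSucc.2 ⟨hi, hs⟩))).1
  simp at this

end Word

section Ball

variable {n i : ℕ} (x : Fin n → Bool)

theorem ext_flipAt (hi : i < n) :
    ext n (flipAt x i) = Function.update (ext n x) i (!ext n x i) := by
  funext j
  by_cases hj : j < n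
  · by_cases hji : j = i
    · subst hji
      simp [ext, flipAt, hj]
    · simp [ext, flipAt, hj, hji]
  · simp [ext, hj, Function.update_of_ne (show j ≠ i by omega)]

theorem sum_ballG {M : Type*} [AddCommMonoid M] (f : (Fin n → Bool) → M) :
    ∑ y ∈ ballG n x, f y = f x + ∑ i ∈ grainPositions n (ext n x), f (flipAt x i) := by
  have hlt : ∀ i ∈ grainPositions n (ext n x), i < n := fun i hi =>
    (mem_grainPositions.1 hi).2.1
  have hx : x ∉ (grainPositions n (ext n x)).image (flipAt x) := by
    simp only [mem_image, not_exists, not_and]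
    intro i hi h
    simpa [flipAt] using congrFun h ⟨i, hlt i hi⟩
  have hinj : Set.InjOn (flipAt x) (grainPositions n (ext n x)) := by
    intro i hi i' _ h
    by_contra hne
    have := congrFun h ⟨i, hlt i hi⟩
    simp [flipAt, hne] at this
  rw [ballG_eq, sum_insert hx, sum_image hinj]

end Ball

section Weight

variable {n : ℕ}

theorem one_le_rho (X : ℕ → Bool) : 1 ≤ rho n X := Nat.le_add_right 1 _

theorem wt_of_mu_le_one {y : Fin n → Bool} (h : mu n (ext n y) ≤ 1) :
    wt n y = 1 / rho n (ext n y) := if_pos h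

theorem one_div_sub_le_wt {y : Fin n → Bool} {M : ℕ} (h : mu n (ext n y) ≤ M) :
    1 / (rho n (ext n y) : ℝ) - M / (rho n (ext n y) : ℝ) ^ 3 ≤ wt n y := by
  have hρ : (0 : ℝ) < rho n (ext n y) := by exact_mod_cast one_le_rho _
  have hM : (mu n (ext n y) : ℝ) ≤ M := by exact_mod_cast h
  unfold wt
  split_ifs
  · have : (0 : ℝ) ≤ M / (rho n (ext n y) : ℝ) ^ 3 := by positivity
    linarith
  · calc 1 / (rho n (ext n y) : ℝ) - M / (rho n (ext n y) : ℝ) ^ 3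
        ≤ 1 / (rho n (ext n y) : ℝ) - mu n (ext n y) / (rho n (ext n y) : ℝ) ^ 3 := by
          gcongr
      _ = _ := by field_simp

theorem one_div_sub_le_wt_of_rho_mem_Icc {y : Fin n → Bool} {M : ℕ} {r : ℝ}
    (hM : mu n (ext n y) ≤ M) (hr : 1 < r) (hlo : r - 1 ≤ rho n (ext n y))
    (hhi : (rho n (ext n y) : ℝ) ≤ r) :
    1 / r - M / (r - 1) ^ 3 ≤ wt n y := by
  have hρ : (0 : ℝ) < rho n (ext n y) := by exact_mod_cast one_le_rho _
  calc 1 / r - M / (r - 1) ^ 3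
      ≤ 1 / (rho n (ext n y) : ℝ) - M / (rho n (ext n y) : ℝ) ^ 3 := by
        gcongr
    _ ≤ wt n y := one_div_sub_le_wt hM

end Weight

/-- The numerator of `one_le_transversal_bound` with `m = 1 + u`, `r = 3 + u + v`. Expanded, its
only negative coefficient is that of `-4u²`, which `u (2u - 1)² ≥ 0` absorbs. -/
theorem transversal_numerator_le {u v : ℝ} (hu : 0 ≤ u) (hv : 0 ≤ v) :
    (1 + u) * u * (3 + u + v) * (2 + u + v) ^ 3
        + (2 + v) * (2 + u) * (3 + u + v) * (1 + u + v) ^ 3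
      ≤ 2 * (1 + u) * (1 + u + v) ^ 2 * (2 + u + v) ^ 3 := by
  have huv := mul_nonneg hu hv
  nlinarith [mul_nonneg hu (sq_nonneg (2 * u - 1)), mul_nonneg huv huv,
    mul_nonneg (mul_nonneg huv huv) huv, pow_nonneg hu 3, pow_nonneg hu 4, pow_nonneg hu 5,
    pow_nonneg hu 6, pow_nonneg hv 3, pow_nonneg hv 4, pow_nonneg hv 5]

theorem one_le_transversal_bound {r m : ℝ} (hm : 1 ≤ m) (hr : m + 2 ≤ r) :
    1 ≤ m * (1 / (r - 2) - (m - 1) / (r - 2) ^ 3)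
      + (r - m) * (1 / r - (m + 1) / (r - 1) ^ 3) := by
  have h0 : 0 < r := by linarith
  have h1 : 0 < r - 1 := by linarith
  have h2 : 0 < r - 2 := by linarith
  have key := transversal_numerator_le (u := m - 1) (v := r - m - 2) (by linarith) (by linarith)
  rw [← sub_nonneg]
  have heq : m * (1 / (r - 2) - (m - 1) / (r - 2) ^ 3)
        + (r - m) * (1 / r - (m + 1) / (r - 1) ^ 3) - 1
      = (2 * m * (r - 2) ^ 2 * (r - 1) ^ 3
          - (m * (m - 1) * r * (r - 1) ^ 3 + (r - m) * (m + 1) * r * (r - 2) ^ 3))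
        / (r * (r - 2) ^ 3 * (r - 1) ^ 3) := by
    field_simp
    ring
  rw [heq]
  apply div_nonneg _ (by positivity)
  linear_combination key

section Transversal

variable {n i : ℕ} {x : Fin n → Bool}

theorem wt_flipAt_ge_of_succ_mem (hi : i ∈ grainPositions n (ext n x))
    (hs : i + 1 ∈ grainPositions n (ext n x)) :
    1 / ((rho n (ext n x) : ℝ) - 2)
        - ((mu n (ext n x) : ℝ) - 1) / ((rho n (ext n x) : ℝ) - 2) ^ 3
      ≤ wt n (flipAt x i) := by
  have hflip := ext_flipAt x (mem_grainPositions.1 hi).2.1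
  have hmu := mu_update_lt_of_succ_mem hi hs
  have hrho : (rho n (ext n (flipAt x i)) : ℝ) = rho n (ext n x) - 2 := by
    rw [hflip, ← rho_update_of_succ_mem hi hs]
    push_cast
    ring
  have h := one_div_sub_le_wt (y := flipAt x i) (M := mu n (ext n x) - 1)
    (by rw [hflip]; omega)
  rwa [hrho, Nat.cast_sub (by omega), Nat.cast_one] at h

theorem wt_flipAt_ge_of_succ_not_mem (hi : i ∈ grainPositions n (ext n x))
    (hs : i + 1 ∉ grainPositions n (ext n x)) :
    1 / (rho n (ext n x) : ℝ)
        - ((mu n (ext n x) : ℝ) + 1) / ((rho n (ext n x) : ℝ) - 1) ^ 3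
      ≤ wt n (flipAt x i) := by
  have hflip := ext_flipAt x (mem_grainPositions.1 hi).2.1
  have h2 : (2 : ℝ) ≤ rho n (ext n x) := by exact_mod_cast two_le_rho_of_mem hi
  have hlo : (rho n (ext n x) : ℝ) ≤ rho n (ext n (flipAt x i)) + 1 := by
    rw [hflip]; exact_mod_cast rho_le_rho_update_add_one hi hs
  have hhi : (rho n (ext n (flipAt x i)) : ℝ) ≤ rho n (ext n x) := by
    rw [hflip]; exact_mod_cast rho_update_le hi
  exact_mod_cast one_div_sub_le_wt_of_rho_mem_Icc (M := mu n (ext n x) + 1)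
    (by rw [hflip]; exact mu_update_le hi) (by linarith) (by linarith) hhi

theorem wt_flipAt_ge_of_mu_eq_zero (hi : i ∈ grainPositions n (ext n x))
    (hμ : mu n (ext n x) = 0) :
    1 / (rho n (ext n x) : ℝ) ≤ wt n (flipAt x i) := by
  have hflip := ext_flipAt x (mem_grainPositions.1 hi).2.1
  have hs : i + 1 ∉ grainPositions n (ext n x) := fun hs => by
    rw [mu_eq_card_withSucc, card_eq_zero] at hμ
    simpa [hμ] using mem_withSucc.2 ⟨hi, hs⟩
  have hmu := mu_update_le hi
  have hhi := rho_update_le hi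
  rw [← hflip] at hhi
  rw [wt_of_mu_le_one (by rw [hflip]; omega)]
  have := one_le_rho (n := n) (ext n (flipAt x i))
  gcongr

theorem one_le_sum_wt_ballG_of_mu_eq_zero (hμ : mu n (ext n x) = 0) :
    1 ≤ ∑ y ∈ ballG n x, wt n y := by
  have hρ : (0 : ℝ) < rho n (ext n x) := by exact_mod_cast one_le_rho (ext n x)
  have hcard : ((grainPositions n (ext n x)).card : ℝ) = rho n (ext n x) - 1 := by
    rw [rho_eq_card_grainPositions_add_one]; push_cast; ring
  rw [sum_ballG, wt_of_mu_le_one (by omega)]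
  set ρ : ℝ := (rho n (ext n x) : ℝ)
  calc 1 = 1 / ρ + (ρ - 1) * (1 / ρ) := by field_simp; ring
    _ ≤ 1 / ρ + ∑ i ∈ grainPositions n (ext n x), wt n (flipAt x i) := by
      rw [← hcard, ← nsmul_eq_mul]
      gcongr
      exact card_nsmul_le_sum _ _ _ fun i hi => wt_flipAt_ge_of_mu_eq_zero hi hμ

theorem one_le_sum_wt_ballG_of_mu_pos (hμ : 0 < mu n (ext n x)) :
    1 ≤ ∑ y ∈ ballG n x, wt n y := by
  set G := grainPositions n (ext n x)
  have hμρ : (mu n (ext n x) : ℝ) + 2 ≤ rho n (ext n x) := by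
    exact_mod_cast mu_add_two_le_rho hμ
  have hA : ((G.filter (· + 1 ∈ G)).card : ℝ) = mu n (ext n x) := by
    rw [mu_eq_card_withSucc]; rfl
  have hB : ((G.filter (· + 1 ∉ G)).card : ℝ) = rho n (ext n x) - 1 - mu n (ext n x) := by
    have := card_filter_add_card_filter_not (s := G) (· + 1 ∈ G)
    rw [rho_eq_card_grainPositions_add_one, mu_eq_card_withSucc, ← this]
    push_cast [withSucc]
    ring
  have hself : 1 / (rho n (ext n x) : ℝ)
      - (mu n (ext n x) + 1) / (rho n (ext n x) - 1 : ℝ) ^ 3 ≤ wt n x := by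
    exact_mod_cast one_div_sub_le_wt_of_rho_mem_Icc (M := mu n (ext n x) + 1) (by simp)
      (by linarith) (by linarith) le_rfl
  rw [sum_ballG, ← sum_filter_add_sum_filter_not G (· + 1 ∈ G)]
  set ρ : ℝ := (rho n (ext n x) : ℝ)
  set μ : ℝ := (mu n (ext n x) : ℝ)
  calc 1 ≤ μ * (1 / (ρ - 2) - (μ - 1) / (ρ - 2) ^ 3)
        + (ρ - μ) * (1 / ρ - (μ + 1) / (ρ - 1) ^ 3) :=
        one_le_transversal_bound (Nat.one_le_cast.2 hμ) hμρ
    _ = (1 / ρ - (μ + 1) / (ρ - 1) ^ 3) + (μ * (1 / (ρ - 2) - (μ - 1) / (ρ - 2) ^ 3)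
          + (ρ - 1 - μ) * (1 / ρ - (μ + 1) / (ρ - 1) ^ 3)) := by ring
    _ ≤ _ := by
      gcongr ?_ + (?_ + ?_)
      · have := card_nsmul_le_sum _ _ _ fun i hi =>
          wt_flipAt_ge_of_succ_mem (x := x) (mem_filter.1 hi).1 (mem_filter.1 hi).2
        rwa [nsmul_eq_mul, hA] at this
      · have := card_nsmul_le_sum _ _ _ fun i hi =>
          wt_flipAt_ge_of_succ_not_mem (x := x) (mem_filter.1 hi).1 (mem_filter.1 hi).2
        rwa [nsmul_eq_mul, hB] at this

end Transversal

theorem grain_fractional_transversal_general (n : ℕ) :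
    ∀ x : Fin n → Bool, 1 ≤ ∑ y ∈ ballG n x, wt n y := by
  intro x
  rcases (mu n (ext n x)).eq_zero_or_pos with hμ | hμ
  · exact one_le_sum_wt_ballG_of_mu_eq_zero hμ
  · exact one_le_sum_wt_ballG_of_mu_pos hμ

/-- **Improved fractional transversal for the single grain-error channel.**
For every `x ∈ {0,1}^n`, `∑_{y ∈ B_{G,1}(x)} w_y ≥ 1`, where
`w_y = 1/ρ(y)` if `μ(y) ≤ 1` and `w_y = (1/ρ(y))(1 - μ(y)/ρ(y)²)` otherwise. -/
theorem grain_fractional_transversal (n : ℕ) (hn : 1 ≤ n) :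
    ∀ x : Fin n → Bool, 1 ≤ ∑ y ∈ ballG n x, wt n y :=
  grain_fractional_transversal_general n
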